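/- arXiv:1009.2292 — 4 statements merged into one kernel-verified Lean document; each statement's English description precedes it below -/
import Mathlib

section
/- Let G be a domain in the triangular lattice X and let H = int(G) be its set of interior points. Then G equals the union of the closed balls B₁(q) in X of radius 1 over all q in H; in particular, the set of interior points determines the domain G completely. -/
/-!
Common framework: subgraphs of an ambient simple graph are modelled as vertex sets
with the induced graph structure (this captures condition (iv): domains are induced
subgraphs). Spheres, curvature, interior/boundary points, domains, smooth domains,
simple connectivity, Euler characteristic, and the triangular lattice `tri`.
-/

namespace TriGB

variable {V : Type*}

/-- The subgraph of `G` induced on the vertex set `T`, as a graph on the ambient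
vertex type (vertices outside `T` are isolated). -/
def restrict (G : SimpleGraph V) (T : Set V) : SimpleGraph V where
  Adj a b := a ∈ T ∧ b ∈ T ∧ G.Adj a b
  symm := ⟨fun _ _ ⟨ha, hb, h⟩ => ⟨hb, ha, h.symm⟩⟩
  loopless := ⟨fun a ⟨_, _, h⟩ => G.loopless.irrefl a h⟩

/-- The neighbours of `p` lying inside `T` (the vertex set of the unit sphere of `p`
in the subgraph induced on `T`, for `p ∈ T`). -/
def nbrs (G : SimpleGraph V) (T : Set V) (p : V) : Set V := {q | q ∈ T ∧ G.Adj p q}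

/-- The vertex set of the sphere of radius `r` around `p` in the subgraph induced on `T`:
points of `T` at graph distance `r` from `p` within that subgraph. -/
def sphVerts (G : SimpleGraph V) (T : Set V) (p : V) (r : ℕ) : Set V :=
  {q | q ∈ T ∧ (restrict G T).Reachable p q ∧ (restrict G T).dist p q = r}

/-- The vertex set of the ball of radius `r` around `p` in the subgraph induced on `T`. -/
def ballVerts (G : SimpleGraph V) (T : Set V) (p : V) (r : ℕ) : Set V :=
  {q | q ∈ T ∧ (restrict G T).Reachable p q ∧ (restrict G T).dist p q ≤ r}

/-- The edges of the sphere of radius `r` around `p`: edges of the (induced) subgraph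
joining two vertices at distance `r` from `p`. -/
def sphEdges (G : SimpleGraph V) (T : Set V) (p : V) (r : ℕ) : Set (Sym2 V) :=
  {e | ∃ a b, e = s(a, b) ∧ a ∈ sphVerts G T p r ∧ b ∈ sphVerts G T p r ∧ G.Adj a b}

/-- The arc length `|S_r(p)|`: the number of edges of the sphere of radius `r`. -/
noncomputable def arcLen (G : SimpleGraph V) (T : Set V) (p : V) (r : ℕ) : ℕ :=
  (sphEdges G T p r).ncard

/-- The (second order Puiseux) curvature `K(p) = 2|S₁(p)| - |S₂(p)|`. -/
noncomputable def curv (G : SimpleGraph V) (T : Set V) (p : V) : ℤ :=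
  2 * (arcLen G T p 1 : ℤ) - (arcLen G T p 2 : ℤ)

/-- `p` is an interior point of `T`: its unit sphere within `T` coincides with its
unit sphere in the ambient graph (all neighbours, with all edges between them,
lie in `T`; in the induced model this means all ambient neighbours belong to `T`). -/
def IsInteriorPt (G : SimpleGraph V) (T : Set V) (p : V) : Prop :=
  p ∈ T ∧ ∀ q, G.Adj p q → q ∈ T

/-- `p` is a boundary point of `T`: a non-interior point of `T` adjacent to an
interior point. -/
def IsBoundaryPt (G : SimpleGraph V) (T : Set V) (p : V) : Prop :=
  p ∈ T ∧ ¬ IsInteriorPt G T p ∧ ∃ q, G.Adj p q ∧ IsInteriorPt G T q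

/-- The set of interior points of `T`. -/
def interiorSet (G : SimpleGraph V) (T : Set V) : Set V := {p | IsInteriorPt G T p}

/-- The set of boundary points of `T`. -/
def boundarySet (G : SimpleGraph V) (T : Set V) : Set V := {p | IsBoundaryPt G T p}

/-- `T` is a one-dimensional graph: every vertex of `T` has a nonempty and edgeless
unit sphere within `T`. -/
def OneDimSet (G : SimpleGraph V) (T : Set V) : Prop :=
  ∀ p ∈ T, (nbrs G T p).Nonempty ∧ ∀ q ∈ nbrs G T p, ∀ r ∈ nbrs G T p, ¬ G.Adj q r

/-- `p` is a two-dimensional point of `T`: its unit sphere within `T` is a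
one-dimensional graph. -/
def TwoDimPt (G : SimpleGraph V) (T : Set V) (p : V) : Prop :=
  OneDimSet G (nbrs G T p)

/-- A domain: (i) two-dimensional, (ii) every vertex interior or boundary,
(iii) the boundary points form a one-dimensional graph, (iv) induced (built into
the model), (v) interior points sharing a common boundary point are adjacent or
both adjacent to a third interior point. -/
def IsDomain (G : SimpleGraph V) (T : Set V) : Prop :=
  (∀ p ∈ T, TwoDimPt G T p) ∧
  (∀ p ∈ T, IsInteriorPt G T p ∨ IsBoundaryPt G T p) ∧
  OneDimSet G (boundarySet G T) ∧
  (∀ p q, IsInteriorPt G T p → IsInteriorPt G T q → p ≠ q →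
    (∃ b, IsBoundaryPt G T b ∧ G.Adj p b ∧ G.Adj q b) →
    (G.Adj p q ∨ ∃ r, IsInteriorPt G T r ∧ r ≠ p ∧ r ≠ q ∧ G.Adj p r ∧ G.Adj q r))

/-- A smooth domain: a domain whose complement is also a domain. -/
def IsSmoothDomain (G : SimpleGraph V) (T : Set V) : Prop :=
  IsDomain G T ∧ IsDomain G Tᶜ

/-- A closed loop in `T`: a cyclic sequence of points of `T` such that consecutive
points are equal or adjacent (curves are loops; trivial loops are constant). -/
def IsLoopIn (G : SimpleGraph V) (T : Set V) {n : ℕ} (x : Fin (n + 1) → V) : Prop :=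
  (∀ i, x i ∈ T) ∧ ∀ i, x i = x (i + 1) ∨ G.Adj (x i) (x (i + 1))

/-- An elementary deformation step between loops in `T`: exactly one point moves,
by distance `1`. -/
def LoopStep (G : SimpleGraph V) (T : Set V) {n : ℕ} (x y : Fin (n + 1) → V) : Prop :=
  IsLoopIn G T x ∧ IsLoopIn G T y ∧ ∃ j, G.Adj (x j) (y j) ∧ ∀ i, i ≠ j → x i = y i

/-- `T` is simply connected: every closed loop of interior points can be deformed,
by finitely many elementary steps within the interior, to a trivial (constant) loop. -/
def SimplyConnected (G : SimpleGraph V) (T : Set V) : Prop :=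
  ∀ (n : ℕ) (x : Fin (n + 1) → V), IsLoopIn G (interiorSet G T) x →
    ∃ c : V, Relation.ReflTransGen (LoopStep G (interiorSet G T)) x (fun _ => c)

/-- The edges of the subgraph induced on `T`. -/
def edgesOf (G : SimpleGraph V) (T : Set V) : Set (Sym2 V) :=
  {e | ∃ a b, e = s(a, b) ∧ a ∈ T ∧ b ∈ T ∧ G.Adj a b}

/-- The (triangular) faces of the subgraph induced on `T`: triples of mutually
adjacent vertices of `T`. -/
def facesOf (G : SimpleGraph V) (T : Set V) : Set (Finset V) :=
  {t | t.card = 3 ∧ ↑t ⊆ T ∧ ∀ a ∈ t, ∀ b ∈ t, a ≠ b → G.Adj a b}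

/-- The Euler characteristic `χ = v - e + f`. -/
noncomputable def euler (G : SimpleGraph V) (T : Set V) : ℤ :=
  (T.ncard : ℤ) - ((edgesOf G T).ncard : ℤ) + ((facesOf G T).ncard : ℤ)

/-- The total boundary curvature of a domain. -/
noncomputable def totalCurv (G : SimpleGraph V) (T : Set V) : ℤ :=
  ∑ᶠ p ∈ boundarySet G T, curv G T p

/-- The ball of radius 1 around `q` in the ambient graph. -/
def ball1 (G : SimpleGraph V) (q : V) : Set V := insert q (G.neighborSet q)

/-- `T` is a cycle (a simple closed one-dimensional graph): nonempty, one-dimensional,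
connected, and every vertex has exactly two neighbours within `T`. -/
def IsCycleSet (G : SimpleGraph V) (T : Set V) : Prop :=
  T.Nonempty ∧ OneDimSet G T ∧ (∀ a ∈ T, ∀ b ∈ T, (restrict G T).Reachable a b) ∧
  ∀ q ∈ T, (nbrs G T q).ncard = 2

/-- For a general graph: the number of edges of the unit sphere of `g` (the subgraph
induced on the neighbours of `g`). -/
noncomputable def sphereEdgeCount (G : SimpleGraph V) (g : V) : ℕ :=
  (edgesOf G (G.neighborSet g)).ncard

/-- The boundary points of a general graph: vertices whose unit sphere is
one-dimensional but not closed (not a cycle). -/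
def boundaryVerts (G : SimpleGraph V) : Set V :=
  {g | OneDimSet G (G.neighborSet g) ∧ ¬ IsCycleSet G (G.neighborSet g)}

open Classical in
/-- The combinatorial Puiseux curvature: `6 - |S₁(g)|` at interior points (unit sphere
a cycle) and `3 - |S₁(g)|` at boundary points. -/
noncomputable def K1 (G : SimpleGraph V) (g : V) : ℤ :=
  if IsCycleSet G (G.neighborSet g) then 6 - (sphereEdgeCount G g : ℤ)
  else 3 - (sphereEdgeCount G g : ℤ)

/-- `A` is a connected component of the subgraph induced on `U`. -/
def IsComponentOf (G : SimpleGraph V) (A U : Set V) : Prop :=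
  A.Nonempty ∧ A ⊆ U ∧ (∀ a ∈ A, ∀ b ∈ A, (restrict G A).Reachable a b) ∧
  ∀ a ∈ A, ∀ b ∈ U, G.Adj a b → b ∈ A

/-- The six unit directions of the triangular lattice. -/
def hexDirs : Set (ℤ × ℤ) := {(1, 0), (-1, 0), (0, 1), (0, -1), (1, -1), (-1, 1)}

lemma neg_mem_hexDirs {d : ℤ × ℤ} (hd : d ∈ hexDirs) : -d ∈ hexDirs := by
  simp only [hexDirs, Set.mem_insert_iff, Set.mem_singleton_iff] at hd ⊢
  rcases hd with rfl | rfl | rfl | rfl | rfl | rfl <;> simp [Prod.ext_iff]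

/-- The triangular lattice: the graph on `ℤ²` in which `(k,l)` is adjacent to
`(k±1,l)`, `(k,l±1)`, `(k+1,l-1)`, `(k-1,l+1)`. -/
def tri : SimpleGraph (ℤ × ℤ) where
  Adj p q := p - q ∈ hexDirs
  symm := by
    constructor
    intro p q h
    show q - p ∈ hexDirs
    rw [show q - p = -(p - q) by ring]
    exact neg_mem_hexDirs h
  loopless := by
    constructor
    intro p h
    simp only [sub_self, hexDirs, Set.mem_insert_iff, Set.mem_singleton_iff] at h
    rcases h with h | h | h | h | h | h <;> simp [Prod.ext_iff] at h

section InteriorBalls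

variable {G : SimpleGraph V} {T : Set V}

lemma ball1_subset_of_isInteriorPt {q : V} (hq : IsInteriorPt G T q) : ball1 G q ⊆ T := by
  rintro p (rfl | hadj)
  · exact hq.1
  · exact hq.2 p hadj

lemma mem_biUnion_ball1_interiorSet {p : V} (hp : IsInteriorPt G T p ∨ IsBoundaryPt G T p) :
    p ∈ ⋃ q ∈ interiorSet G T, ball1 G q := by
  simp only [Set.mem_iUnion]
  rcases hp with hint | ⟨-, -, q, hadj, hq⟩
  · exact ⟨p, hint, Set.mem_insert p _⟩
  · exact ⟨q, hq, Set.mem_insert_of_mem q hadj.symm⟩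

theorem eq_biUnion_ball1_interiorSet
    (hT : ∀ p ∈ T, IsInteriorPt G T p ∨ IsBoundaryPt G T p) :
    T = ⋃ q ∈ interiorSet G T, ball1 G q :=
  Set.Subset.antisymm (fun p hp => mem_biUnion_ball1_interiorSet (hT p hp))
    (Set.iUnion₂_subset fun _ hq => ball1_subset_of_isInteriorPt hq)

end InteriorBalls

/-- a domain `G` in the triangular lattice is the union of the
radius-one balls in `X` around its interior points; in particular the interior
determines the domain. -/
theorem domain_eq_union_balls_of_interior (T : Set (ℤ × ℤ)) (hT : IsDomain tri T) :
    T = ⋃ q ∈ interiorSet tri T, ball1 tri q :=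
  eq_biUnion_ball1_interiorSet hT.2.1

end TriGB
end

section
/- Curvature is local: let G₁ and G₂ be two domains in the triangular lattice X, let p be a vertex of both, and suppose the balls of radius 2 around p satisfy B₂(p) ∩ G₁ = B₂(p) ∩ G₂ (as subgraphs, denoted U₁ = U₂). Set Hᵢ = Gᵢ \ {p}. Then the change in total curvature caused by removing p is the same in both domains: (Σ_{q ∈ H₁} K(q)) − (Σ_{q ∈ H₂} K(q)) = (Σ_{q ∈ G₁} K(q)) − (Σ_{q ∈ G₂} K(q)). -/
/-!
Common framework: subgraphs of an ambient simple graph are modelled as vertex sets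
with the induced graph structure (this captures condition (iv): domains are induced
subgraphs). Spheres, curvature, interior/boundary points, domains, smooth domains,
simple connectivity, Euler characteristic, and the triangular lattice `tri`.
-/

namespace TriGB

variable {V : Type*}

/-!
Removing `p` from `T` can only affect the spheres `S₁(q)`, `S₂(q)` of points `q` at distance
at most `2` from `p`, and the edges that `S_r(q)` loses are exactly its edges incident to a vertex
that leaves `S_r(q)`. Such a vertex is `p` itself, or a neighbour of `p` all of whose paths of
length two to `q` pass through `p`. Hence all lost edges, and all common neighbours that decide
membership in `S₂(q)` along them, lie in the ball `B = B₂(p)`, so that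
`K_T(q) - K_{T ∖ p}(q) = K_B(q) - K_{B ∖ p}(q)` for every `q`. Summing over `q`, the change of
the total curvature is determined by `B₂(p)`.
-/

lemma _root_.SimpleGraph.reachable_and_dist_eq_iff {G : SimpleGraph V} {u v : V} {n : ℕ} :
    G.Reachable u v ∧ G.dist u v = n ↔ G.edist u v = n := by
  refine ⟨fun ⟨hr, hd⟩ => hd ▸ hr.coe_dist_eq_edist.symm, fun h => ?_⟩
  have hr : G.Reachable u v := SimpleGraph.reachable_of_edist_ne_top (by simp [h])
  exact ⟨hr, by exact_mod_cast hr.coe_dist_eq_edist.trans h⟩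

lemma _root_.SimpleGraph.reachable_and_dist_le_iff {G : SimpleGraph V} {u v : V} {n : ℕ} :
    G.Reachable u v ∧ G.dist u v ≤ n ↔ G.edist u v ≤ n := by
  refine ⟨fun ⟨hr, hd⟩ => hr.coe_dist_eq_edist ▸ by exact_mod_cast hd, fun h => ?_⟩
  have hr : G.Reachable u v :=
    SimpleGraph.reachable_of_edist_ne_top (ne_top_of_le_ne_top (by simp) h)
  exact ⟨hr, by exact_mod_cast hr.coe_dist_eq_edist.le.trans h⟩

variable {G : SimpleGraph V} {T U : Set V} {p q a b : V}

lemma mem_sphVerts_one :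
    a ∈ sphVerts G T q 1 ↔ q ∈ T ∧ a ∈ T ∧ G.Adj q a := by
  simp only [sphVerts, Set.mem_ofPred_eq, SimpleGraph.reachable_and_dist_eq_iff, Nat.cast_one,
    SimpleGraph.edist_eq_one_iff_adj, restrict]
  tauto

lemma mem_sphVerts_two :
    a ∈ sphVerts G T q 2 ↔
      q ∈ T ∧ a ∈ T ∧ q ≠ a ∧ ¬ G.Adj q a ∧ ∃ w ∈ T, G.Adj q w ∧ G.Adj w a := by
  simp only [sphVerts, Set.mem_ofPred_eq, SimpleGraph.reachable_and_dist_eq_iff, Nat.cast_ofNat,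
    SimpleGraph.edist_eq_two_iff, Set.Nonempty, SimpleGraph.mem_commonNeighbors, restrict]
  constructor
  · rintro ⟨ha, hne, hadj, w, ⟨hq, hw, hqw⟩, -, -, haw⟩
    exact ⟨hq, ha, hne, fun h => hadj ⟨hq, ha, h⟩, w, hw, hqw, haw.symm⟩
  · rintro ⟨hq, ha, hne, hadj, w, hw, hqw, hwa⟩
    exact ⟨ha, hne, fun h => hadj h.2.2, w, ⟨hq, hw, hqw⟩, ha, hw, hwa.symm⟩

lemma mem_ballVerts_two :
    a ∈ ballVerts G T p 2 ↔
      p ∈ T ∧ a ∈ T ∧ (a = p ∨ G.Adj p a ∨ ∃ w ∈ T, G.Adj p w ∧ G.Adj w a) := by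
  simp only [ballVerts, Set.mem_ofPred_eq, SimpleGraph.reachable_and_dist_le_iff]
  rw [Nat.cast_ofNat, ← not_lt, SimpleGraph.two_lt_edist_iff]
  simp only [Set.eq_empty_iff_forall_notMem, SimpleGraph.mem_commonNeighbors, restrict]
  grind [SimpleGraph.adj_comm]

lemma sphVerts_subset {r : ℕ} : sphVerts G T q r ⊆ T := fun _ h => h.1

lemma sphVerts_one_mono (h : U ⊆ T) : sphVerts G U q 1 ⊆ sphVerts G T q 1 := fun a ha => by
  obtain ⟨hq, ha, hqa⟩ := mem_sphVerts_one.mp ha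
  exact mem_sphVerts_one.mpr ⟨h hq, h ha, hqa⟩

lemma sphVerts_two_mono (h : U ⊆ T) : sphVerts G U q 2 ⊆ sphVerts G T q 2 := fun a ha => by
  obtain ⟨hq, ha, hne, hqa, w, hw, hqw, hwa⟩ := mem_sphVerts_two.mp ha
  exact mem_sphVerts_two.mpr ⟨h hq, h ha, hne, hqa, w, h hw, hqw, hwa⟩

lemma mem_sphVerts_two_iff_of_subset (h : U ⊆ T) (hq : q ∈ U) (ha : a ∈ U)
    (hmid : ∀ w ∈ T, G.Adj q w → G.Adj w a → w ∈ U) :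
    a ∈ sphVerts G U q 2 ↔ a ∈ sphVerts G T q 2 := by
  refine ⟨fun h' => sphVerts_two_mono h h', fun h' => ?_⟩
  obtain ⟨-, -, hne, hqa, w, hw, hqw, hwa⟩ := mem_sphVerts_two.mp h'
  exact mem_sphVerts_two.mpr ⟨hq, ha, hne, hqa, w, hmid w hw hqw hwa, hqw, hwa⟩

lemma sphVerts_eq_empty_of_notMem (hq : q ∉ T) (r : ℕ) : sphVerts G T q r = ∅ := by
  refine Set.eq_empty_of_forall_notMem fun a ⟨ha, ⟨w⟩, _⟩ => ?_
  cases w with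
  | nil => exact hq ha
  | cons hqw _ => exact hq hqw.1

lemma curv_eq_zero_of_notMem (hq : q ∉ T) : curv G T q = 0 := by
  simp [curv, arcLen, sphEdges, sphVerts_eq_empty_of_notMem hq]

lemma mem_sphVerts_one_sdiff :
    a ∈ sphVerts G T q 1 \ sphVerts G (T \ {p}) q 1 ↔
      a ∈ sphVerts G T q 1 ∧ (q = p ∨ a = p) := by
  simp only [Set.mem_sdiff, mem_sphVerts_one, Set.mem_singleton_iff]
  tauto

lemma mem_sphVerts_two_sdiff :
    a ∈ sphVerts G T q 2 \ sphVerts G (T \ {p}) q 2 ↔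
      a ∈ sphVerts G T q 2 ∧ (q = p ∨ a = p ∨ ∀ w ∈ T, G.Adj q w → G.Adj w a → w = p) := by
  simp only [Set.mem_sdiff, mem_sphVerts_two, Set.mem_singleton_iff]
  grind

lemma mem_edgesOf {S : Set V} : s(a, b) ∈ edgesOf G S ↔ a ∈ S ∧ b ∈ S ∧ G.Adj a b := by
  refine ⟨fun ⟨c, d, he, hc, hd, hcd⟩ => ?_, fun h => ⟨a, b, rfl, h⟩⟩
  rcases Sym2.eq_iff.mp he with ⟨rfl, rfl⟩ | ⟨rfl, rfl⟩
  exacts [⟨hc, hd, hcd⟩, ⟨hd, hc, hcd.symm⟩]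

lemma mem_edgesOf_sdiff {S S' : Set V} :
    s(a, b) ∈ edgesOf G S \ edgesOf G S' ↔
      G.Adj a b ∧ (a ∈ S \ S' ∧ b ∈ S ∨ b ∈ S \ S' ∧ a ∈ S) := by
  simp only [Set.mem_sdiff, mem_edgesOf]
  tauto

lemma edgesOf_sdiff_congr {S S' R R' : Set V} (hlost : S \ S' = R \ R')
    (hnbr : ∀ a ∈ S \ S', ∀ b, G.Adj a b → (b ∈ S ↔ b ∈ R)) :
    edgesOf G S \ edgesOf G S' = edgesOf G R \ edgesOf G R' := by
  ext e
  induction e using Sym2.ind with | _ a b => ?_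
  rw [mem_edgesOf_sdiff, mem_edgesOf_sdiff, ← hlost]
  exact and_congr_right fun hab => or_congr (and_congr_right fun ha => hnbr a ha b hab)
    (and_congr_right fun hb => hnbr b hb a hab.symm)

lemma edgesOf_mono {S S' : Set V} (h : S ⊆ S') : edgesOf G S ⊆ edgesOf G S' :=
  fun _ ⟨a, b, he, ha, hb, hab⟩ => ⟨a, b, he, h ha, h hb, hab⟩

lemma edgesOf_finite {S : Set V} (hS : S.Finite) : (edgesOf G S).Finite :=
  ((hS.prod hS).image fun x => s(x.1, x.2)).subset
    fun _ ⟨a, b, he, ha, hb, _⟩ => ⟨(a, b), ⟨ha, hb⟩, he.symm⟩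

lemma ncard_edgesOf_sub_ncard_edgesOf {S S' : Set V} (hS : S.Finite) (h : S' ⊆ S) :
    ((edgesOf G S).ncard : ℤ) - (edgesOf G S').ncard = (edgesOf G S \ edgesOf G S').ncard := by
  rw [Set.ncard_sdiff' (edgesOf_mono h) (edgesOf_finite hS),
    Nat.cast_sub (Set.ncard_le_ncard (edgesOf_mono h) (edgesOf_finite hS))]

lemma sphEdges_eq_edgesOf {r : ℕ} : sphEdges G T q r = edgesOf G (sphVerts G T q r) := rfl

lemma curv_sub_curv_of_subset (hT : T.Finite) (h : U ⊆ T) :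
    curv G T q - curv G U q =
      2 * ((sphEdges G T q 1 \ sphEdges G U q 1).ncard : ℤ) -
        (sphEdges G T q 2 \ sphEdges G U q 2).ncard := by
  simp only [curv, arcLen, sphEdges_eq_edgesOf]
  rw [← ncard_edgesOf_sub_ncard_edgesOf (hT.subset sphVerts_subset) (sphVerts_one_mono h),
    ← ncard_edgesOf_sub_ncard_edgesOf (hT.subset sphVerts_subset) (sphVerts_two_mono h)]
  ring

lemma ballVerts_subset {r : ℕ} : ballVerts G T p r ⊆ T := fun _ h => h.1

lemma self_mem_ballVerts (hp : p ∈ T) : p ∈ ballVerts G T p 2 :=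
  mem_ballVerts_two.mpr ⟨hp, hp, Or.inl rfl⟩

lemma mem_ballVerts_of_adj (hp : p ∈ T) (ha : a ∈ T) (hpa : G.Adj p a) :
    a ∈ ballVerts G T p 2 :=
  mem_ballVerts_two.mpr ⟨hp, ha, Or.inr (Or.inl hpa)⟩

lemma mem_ballVerts_of_adj_of_adj {w : V} (hp : p ∈ T) (hw : w ∈ T) (ha : a ∈ T)
    (hpw : G.Adj p w) (hwa : G.Adj w a) : a ∈ ballVerts G T p 2 :=
  mem_ballVerts_two.mpr ⟨hp, ha, Or.inr (Or.inr ⟨w, hw, hpw, hwa⟩)⟩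

lemma sphVerts_one_sdiff_eq_ballVerts (hp : p ∈ T) :
    sphVerts G T q 1 \ sphVerts G (T \ {p}) q 1 =
      sphVerts G (ballVerts G T p 2) q 1 \ sphVerts G (ballVerts G T p 2 \ {p}) q 1 := by
  ext a
  simp only [mem_sphVerts_one_sdiff, mem_sphVerts_one]
  refine ⟨fun ⟨⟨hq, ha, hqa⟩, hqap⟩ => ⟨⟨?_, ?_, hqa⟩, hqap⟩,
    fun ⟨⟨hq, ha, hqa⟩, hqap⟩ => ⟨⟨hq.1, ha.1, hqa⟩, hqap⟩⟩ <;>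
  rcases hqap with rfl | rfl
  exacts [self_mem_ballVerts hp, mem_ballVerts_of_adj hp hq hqa.symm,
    mem_ballVerts_of_adj hp ha hqa, self_mem_ballVerts hp]

lemma mem_sphVerts_one_iff_ballVerts_of_adj_mem_sdiff (hp : p ∈ T)
    (ha : a ∈ sphVerts G T q 1 \ sphVerts G (T \ {p}) q 1) (hab : G.Adj a b) :
    b ∈ sphVerts G T q 1 ↔ b ∈ sphVerts G (ballVerts G T p 2) q 1 := by
  obtain ⟨ha, hqap⟩ := mem_sphVerts_one_sdiff.mp ha
  obtain ⟨-, -, hqa⟩ := mem_sphVerts_one.mp ha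
  simp only [mem_sphVerts_one]
  refine ⟨fun ⟨hq, hb, hqb⟩ => ⟨?_, ?_, hqb⟩, fun ⟨hq, hb, hqb⟩ => ⟨hq.1, hb.1, hqb⟩⟩ <;>
  rcases hqap with rfl | rfl
  exacts [self_mem_ballVerts hp, mem_ballVerts_of_adj hp hq hqa.symm,
    mem_ballVerts_of_adj hp hb hqb, mem_ballVerts_of_adj hp hb hab]

lemma mem_sphVerts_two_ballVerts_iff (hp : p ∈ T) (hq : q ∈ ballVerts G T p 2)
    (ha : a ∈ ballVerts G T p 2) (hnear : q = p ∨ G.Adj p q ∨ a = p ∨ G.Adj p a) :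
    a ∈ sphVerts G (ballVerts G T p 2) q 2 ↔ a ∈ sphVerts G T q 2 := by
  refine mem_sphVerts_two_iff_of_subset ballVerts_subset hq ha fun w hw hqw hwa => ?_
  rcases hnear with rfl | hpq | rfl | hpa
  exacts [mem_ballVerts_of_adj hp hw hqw,
    mem_ballVerts_of_adj_of_adj hp (ballVerts_subset hq) hw hpq hqw,
    mem_ballVerts_of_adj hp hw hwa.symm,
    mem_ballVerts_of_adj_of_adj hp (ballVerts_subset ha) hw hpa hwa.symm]

lemma sphVerts_two_sdiff_eq_ballVerts (hp : p ∈ T) :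
    sphVerts G T q 2 \ sphVerts G (T \ {p}) q 2 =
      sphVerts G (ballVerts G T p 2) q 2 \ sphVerts G (ballVerts G T p 2 \ {p}) q 2 := by
  ext a
  simp only [mem_sphVerts_two_sdiff]
  constructor
  · rintro ⟨ha, hqap⟩
    obtain ⟨hq, haT, -, -, w, hw, hqw, hwa⟩ := mem_sphVerts_two.mp ha
    rcases hqap with rfl | rfl | hmid
    · exact ⟨(mem_sphVerts_two_ballVerts_iff hp (self_mem_ballVerts hp)
        (mem_ballVerts_of_adj_of_adj hp hw haT hqw hwa) (Or.inl rfl)).mpr ha, Or.inl rfl⟩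
    · exact ⟨(mem_sphVerts_two_ballVerts_iff hp
        (mem_ballVerts_of_adj_of_adj hp hw hq hwa.symm hqw.symm) (self_mem_ballVerts hp)
        (Or.inr (Or.inr (Or.inl rfl)))).mpr ha, Or.inr (Or.inl rfl)⟩
    · obtain rfl := hmid w hw hqw hwa
      exact ⟨(mem_sphVerts_two_ballVerts_iff hp (mem_ballVerts_of_adj hp hq hqw.symm)
        (mem_ballVerts_of_adj hp haT hwa) (Or.inr (Or.inl hqw.symm))).mpr ha,
        Or.inr (Or.inr fun v hv => hmid v (ballVerts_subset hv))⟩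
  · rintro ⟨ha, hqap⟩
    refine ⟨sphVerts_two_mono ballVerts_subset ha, ?_⟩
    rcases hqap with rfl | rfl | hmid
    · exact Or.inl rfl
    · exact Or.inr (Or.inl rfl)
    · obtain ⟨hq, -, -, -, w, hw, hqw, hwa⟩ := mem_sphVerts_two.mp ha
      obtain rfl := hmid w hw hqw hwa
      exact Or.inr (Or.inr fun v hv hqv hva =>
        hmid v (mem_ballVerts_of_adj_of_adj hp (ballVerts_subset hq) hv hqw.symm hqv) hqv hva)

lemma mem_sphVerts_two_iff_ballVerts_of_adj_mem_sdiff (hp : p ∈ T)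
    (ha : a ∈ sphVerts G T q 2 \ sphVerts G (T \ {p}) q 2) (hab : G.Adj a b) :
    b ∈ sphVerts G T q 2 ↔ b ∈ sphVerts G (ballVerts G T p 2) q 2 := by
  obtain ⟨ha, hqap⟩ := mem_sphVerts_two_sdiff.mp ha
  obtain ⟨hq, haT, -, -, w, hw, hqw, hwa⟩ := mem_sphVerts_two.mp ha
  refine ⟨fun hb => ?_, fun hb => sphVerts_two_mono ballVerts_subset hb⟩
  obtain ⟨-, hbT, -, -, v, hv, hqv, hvb⟩ := mem_sphVerts_two.mp hb
  rcases hqap with rfl | rfl | hmid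
  · exact (mem_sphVerts_two_ballVerts_iff hp (self_mem_ballVerts hp)
      (mem_ballVerts_of_adj_of_adj hp hv hbT hqv hvb) (Or.inl rfl)).mpr hb
  · exact (mem_sphVerts_two_ballVerts_iff hp
      (mem_ballVerts_of_adj_of_adj hp hw hq hwa.symm hqw.symm) (mem_ballVerts_of_adj hp hbT hab)
      (Or.inr (Or.inr (Or.inr hab)))).mpr hb
  · obtain rfl := hmid w hw hqw hwa
    exact (mem_sphVerts_two_ballVerts_iff hp (mem_ballVerts_of_adj hp hq hqw.symm)
      (mem_ballVerts_of_adj_of_adj hp haT hbT hwa hab) (Or.inr (Or.inl hqw.symm))).mpr hb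

lemma curv_sub_curv_diff_singleton_eq_ballVerts (hT : T.Finite) (hp : p ∈ T) :
    curv G T q - curv G (T \ {p}) q =
      curv G (ballVerts G T p 2) q - curv G (ballVerts G T p 2 \ {p}) q := by
  rw [curv_sub_curv_of_subset hT Set.sdiff_subset,
    curv_sub_curv_of_subset (hT.subset ballVerts_subset) Set.sdiff_subset]
  simp only [sphEdges_eq_edgesOf]
  rw [edgesOf_sdiff_congr (sphVerts_one_sdiff_eq_ballVerts hp)
      fun _ ha _ hab => mem_sphVerts_one_iff_ballVerts_of_adj_mem_sdiff hp ha hab,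
    edgesOf_sdiff_congr (sphVerts_two_sdiff_eq_ballVerts hp)
      fun _ ha _ hab => mem_sphVerts_two_iff_ballVerts_of_adj_mem_sdiff hp ha hab]

lemma support_curv_subset : Function.support (curv G T) ⊆ T :=
  fun _ hq => by_contra fun hqT => hq (curv_eq_zero_of_notMem hqT)

lemma finsum_mem_curv_of_subset {S : Set V} (h : T ⊆ S) :
    ∑ᶠ q ∈ S, curv G T q = ∑ᶠ q ∈ T, curv G T q :=
  finsum_mem_inter_support_eq' _ _ _ fun _ hq => ⟨fun _ => support_curv_subset hq, fun hqT => h hqT⟩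

theorem finsum_curv_sub_finsum_curv_diff_singleton_eq_ballVerts (hT : T.Finite) (hp : p ∈ T) :
    (∑ᶠ q ∈ T, curv G T q) - ∑ᶠ q ∈ T \ {p}, curv G (T \ {p}) q =
      (∑ᶠ q ∈ ballVerts G T p 2, curv G (ballVerts G T p 2) q) -
        ∑ᶠ q ∈ ballVerts G T p 2 \ {p}, curv G (ballVerts G T p 2 \ {p}) q := by
  rw [← finsum_mem_curv_of_subset (S := T) Set.sdiff_subset,
    ← finsum_mem_curv_of_subset (S := ballVerts G T p 2) Set.sdiff_subset,
    ← finsum_mem_sub_distrib _ _ hT, ← finsum_mem_sub_distrib _ _ (hT.subset ballVerts_subset),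
    finsum_mem_congr rfl fun q _ => curv_sub_curv_diff_singleton_eq_ballVerts hT hp]
  refine finsum_mem_inter_support_eq' _ _ _ fun q hq => ⟨fun _ => ?_, fun hq => ballVerts_subset hq⟩
  rcases Function.support_sub _ _ hq with hq | hq
  exacts [support_curv_subset hq, (support_curv_subset hq).1]

theorem curvature_is_local_general (G₁ G₂ : Set (ℤ × ℤ)) (hf₁ : G₁.Finite) (hf₂ : G₂.Finite)
    (p : ℤ × ℤ)
    (hp₁ : p ∈ G₁) (hp₂ : p ∈ G₂)
    (hball : ballVerts tri G₁ p 2 = ballVerts tri G₂ p 2) :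
    (∑ᶠ q ∈ G₁ \ {p}, curv tri (G₁ \ {p}) q) - (∑ᶠ q ∈ G₂ \ {p}, curv tri (G₂ \ {p}) q) =
      (∑ᶠ q ∈ G₁, curv tri G₁ q) - (∑ᶠ q ∈ G₂, curv tri G₂ q) := by
  have h₁ := finsum_curv_sub_finsum_curv_diff_singleton_eq_ballVerts hf₁ hp₁ (G := tri)
  have h₂ := finsum_curv_sub_finsum_curv_diff_singleton_eq_ballVerts hf₂ hp₂ (G := tri)
  rw [hball] at h₁
  linarith

/-- curvature is local.  If two domains agree on the ball of radius `2`
around `p`, then removing `p` changes the total curvature by the same amount in both. -/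
theorem curvature_is_local (G₁ G₂ : Set (ℤ × ℤ)) (hf₁ : G₁.Finite) (hf₂ : G₂.Finite)
    (h₁ : IsDomain tri G₁) (h₂ : IsDomain tri G₂) (p : ℤ × ℤ)
    (hp₁ : p ∈ G₁) (hp₂ : p ∈ G₂)
    (hball : ballVerts tri G₁ p 2 = ballVerts tri G₂ p 2) :
    (∑ᶠ q ∈ G₁ \ {p}, curv tri (G₁ \ {p}) q) - (∑ᶠ q ∈ G₂ \ {p}, curv tri (G₂ \ {p}) q) =
      (∑ᶠ q ∈ G₁, curv tri G₁ q) - (∑ᶠ q ∈ G₂, curv tri G₂ q) :=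
  curvature_is_local_general G₁ G₂ hf₁ hf₂ p hp₁ hp₂ hball

end TriGB
end

section
/- The number of interior points of a finite smooth domain G in the triangular lattice equals 2f − e + χ(G), where f is the number of triangular faces, e the number of edges, and χ(G) = v − e + f the Euler characteristic of G. -/
/-!
Common framework: subgraphs of an ambient simple graph are modelled as vertex sets
with the induced graph structure (this captures condition (iv): domains are induced
subgraphs). Spheres, curvature, interior/boundary points, domains, smooth domains,
simple connectivity, Euler characteristic, and the triangular lattice `tri`.
-/

namespace TriGB

variable {V : Type*}

/-!
Every vertex `p` of `T` contributes `deg p` to `∑ deg = 2e` and `|S(p)|`, the number of edges of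
its unit sphere, to `∑ |S(p)| = 3f` (each face is counted once at each of its corners). In a
domain of the triangular lattice `deg p - |S(p)|` is `0` at interior points (a full hexagon) and
`1` at boundary points, where the unit sphere is a single arc of the hexagon: it has no isolated
vertex by two-dimensionality, and it cannot consist of two opposite arcs, since their ends would be
adjacent boundary points. Hence `|boundary| = 2e - 3f`, and `|interior| = v - 2e + 3f`.
-/

open scoped Finset

lemma sum_ncard_setOf_eq_mul_ncard {α β : Type*} {s : Set α} (hs : s.Finite) {t : Set β}
    (ht : t.Finite) (r : α → β → Prop) {k : ℕ} (hk : ∀ b ∈ t, {a | a ∈ s ∧ r a b}.ncard = k) :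
    ∑ a ∈ hs.toFinset, {b | b ∈ t ∧ r a b}.ncard = k * t.ncard := by
  classical
  calc ∑ a ∈ hs.toFinset, {b | b ∈ t ∧ r a b}.ncard
        = ∑ a ∈ hs.toFinset, #(ht.toFinset.bipartiteAbove r a) := by
        refine Finset.sum_congr rfl fun a _ => ?_
        rw [← Set.ncard_coe_finset, Finset.coe_bipartiteAbove]
        simp only [Set.Finite.mem_toFinset]
    _ = ∑ b ∈ ht.toFinset, #(hs.toFinset.bipartiteBelow r b) :=
        Finset.sum_card_bipartiteAbove_eq_sum_card_bipartiteBelow r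
    _ = ∑ _b ∈ ht.toFinset, k := Finset.sum_congr rfl fun b hb => by
        rw [← Set.ncard_coe_finset, Finset.coe_bipartiteBelow]
        simp only [Set.Finite.mem_toFinset]
        exact hk b (ht.mem_toFinset.1 hb)
    _ = k * t.ncard := by
        rw [Finset.sum_const, smul_eq_mul, mul_comm, Set.ncard_eq_toFinset_card _ ht]

section InducedSubgraph

variable {V : Type*} {G : SimpleGraph V} {T : Set V}

lemma edgesOf_finite_s6 (hT : T.Finite) : (edgesOf G T).Finite :=
  ((hT.prod hT).image fun x => s(x.1, x.2)).subset <| by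
    rintro _ ⟨a, b, rfl, ha, hb, -⟩
    exact ⟨(a, b), ⟨ha, hb⟩, rfl⟩

lemma facesOf_finite (hT : T.Finite) : (facesOf G T).Finite :=
  (hT.finite_subsets.preimage Finset.coe_injective.injOn).subset fun _ ht => ht.2.1

lemma ncard_setOf_mem_edge {e : Sym2 V} (he : e ∈ edgesOf G T) :
    {p | p ∈ T ∧ p ∈ e}.ncard = 2 := by
  obtain ⟨a, b, rfl, ha, hb, hab⟩ := he
  rw [← Set.ncard_pair hab.ne]
  congr 1
  ext p
  simp only [Sym2.mem_iff, Set.mem_ofPred_eq, Set.mem_insert_iff, Set.mem_singleton_iff]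
  constructor
  · exact fun h => h.2
  · rintro (rfl | rfl) <;> simp [*]

lemma ncard_setOf_mem_face {t : Finset V} (ht : t ∈ facesOf G T) :
    {p | p ∈ T ∧ p ∈ t}.ncard = 3 := by
  rw [← ht.1, ← Set.ncard_coe_finset]
  congr 1
  ext p
  exact ⟨fun h => h.2, fun h => ⟨ht.2.1 h, h⟩⟩

lemma ncard_edges_incident {p : V} (hp : p ∈ T) :
    {e | e ∈ edgesOf G T ∧ p ∈ e}.ncard = (nbrs G T p).ncard := by
  rw [← Set.ncard_image_of_injective _ (fun _ _ => Sym2.congr_right.1 :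
    Function.Injective fun q => s(p, q))]
  congr 1
  ext e
  constructor
  · rintro ⟨⟨a, b, rfl, ha, hb, hab⟩, hpe⟩
    rcases Sym2.mem_iff.1 hpe with rfl | rfl
    · exact ⟨b, ⟨hb, hab⟩, rfl⟩
    · exact ⟨a, ⟨ha, hab.symm⟩, Sym2.eq_swap⟩
  · rintro ⟨q, ⟨hq, hpq⟩, rfl⟩
    exact ⟨⟨p, q, rfl, hp, hq, hpq⟩, Sym2.mem_mk_left p q⟩

lemma ncard_faces_incident {p : V} (hp : p ∈ T) :
    {t | t ∈ facesOf G T ∧ p ∈ t}.ncard = (edgesOf G (nbrs G T p)).ncard := by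
  classical
  have hpe : ∀ e ∈ edgesOf G (nbrs G T p), p ∉ e.toFinset := by
    rintro _ ⟨a, b, rfl, ⟨-, hpa⟩, ⟨-, hpb⟩, -⟩
    simp [Sym2.toFinset_mk_eq, hpa.ne, hpb.ne]
  refine (Set.ncard_congr (fun e _ => insert p e.toFinset) ?_ ?_ ?_).symm
  · intro e he
    obtain ⟨a, b, rfl, ⟨ha, hpa⟩, ⟨hb, hpb⟩, hab⟩ := id he
    refine ⟨⟨?_, ?_, ?_⟩, Finset.mem_insert_self p _⟩
    · rw [Finset.card_insert_of_notMem (hpe _ he), Sym2.toFinset_mk_eq, Finset.card_pair hab.ne]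
    · simp [Sym2.toFinset_mk_eq, Set.insert_subset_iff, hp, ha, hb]
    · simp only [Sym2.toFinset_mk_eq, Finset.mem_insert, Finset.mem_singleton]
      rintro x (rfl | rfl | rfl) y (rfl | rfl | rfl) hxy <;>
        first | exact absurd rfl hxy | assumption | exact SimpleGraph.Adj.symm ‹_›
  · intro e e' he he' h
    have htoFinset : e.toFinset = e'.toFinset := by
      rw [← Finset.erase_insert (hpe e he), h, Finset.erase_insert (hpe e' he')]
    exact Sym2.ext fun x => by rw [← Sym2.mem_toFinset, htoFinset, Sym2.mem_toFinset]
  · rintro t ⟨⟨hcard, hsub, hadj⟩, hpt⟩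
    obtain ⟨a, b, hab, hab'⟩ := Finset.card_eq_two.1 (by rw [Finset.card_erase_of_mem hpt, hcard])
    obtain ⟨hap, ha⟩ := Finset.mem_erase.1 (by simp [hab'] : a ∈ t.erase p)
    obtain ⟨hbp, hb⟩ := Finset.mem_erase.1 (by simp [hab'] : b ∈ t.erase p)
    refine ⟨s(a, b), ⟨a, b, rfl, ⟨hsub ha, hadj p hpt a ha hap.symm⟩,
      ⟨hsub hb, hadj p hpt b hb hbp.symm⟩, hadj a ha b hb hab⟩, ?_⟩
    rw [Sym2.toFinset_mk_eq, ← hab', Finset.insert_erase hpt]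

theorem sum_ncard_nbrs (hT : T.Finite) :
    ∑ p ∈ hT.toFinset, (nbrs G T p).ncard = 2 * (edgesOf G T).ncard := by
  rw [← sum_ncard_setOf_eq_mul_ncard hT (edgesOf_finite_s6 hT) (fun p e => p ∈ e)
    fun _ he => ncard_setOf_mem_edge he]
  exact Finset.sum_congr rfl fun p hp => (ncard_edges_incident (hT.mem_toFinset.1 hp)).symm

theorem sum_ncard_edgesOf_nbrs (hT : T.Finite) :
    ∑ p ∈ hT.toFinset, (edgesOf G (nbrs G T p)).ncard = 3 * (facesOf G T).ncard := by
  rw [← sum_ncard_setOf_eq_mul_ncard hT (facesOf_finite hT) (fun p t => p ∈ t)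
    fun _ ht => ncard_setOf_mem_face ht]
  exact Finset.sum_congr rfl fun p hp => (ncard_faces_incident (hT.mem_toFinset.1 hp)).symm

lemma ncard_eq_ncard_interiorSet_add_ncard_boundarySet (hT : T.Finite)
    (h : ∀ p ∈ T, IsInteriorPt G T p ∨ IsBoundaryPt G T p) :
    T.ncard = (interiorSet G T).ncard + (boundarySet G T).ncard := by
  have hunion : T = interiorSet G T ∪ boundarySet G T :=
    Set.Subset.antisymm h (Set.union_subset (fun _ hp => hp.1) fun _ hp => hp.1)
  conv_lhs => rw [hunion]
  exact Set.ncard_union_eq (Set.disjoint_left.2 fun _ hi hb => hb.2.1 hi)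
    (hT.subset fun _ hp => hp.1) (hT.subset fun _ hp => hp.1)

lemma isBoundaryPt_of_adj_notMem (h : ∀ p ∈ T, IsInteriorPt G T p ∨ IsBoundaryPt G T p)
    {p q : V} (hp : p ∈ T) (hpq : G.Adj p q) (hq : q ∉ T) : IsBoundaryPt G T p :=
  (h p hp).resolve_left fun hint => hq (hint.2 q hpq)

end InducedSubgraph

section TriangularLattice

/-- The six lattice directions in cyclic order, so that `dir i` and `dir j` are adjacent in
`tri` exactly when `i` and `j` are consecutive in `ZMod 6`. -/
def dir : ZMod 6 → ℤ × ℤ := ![(1, 0), (0, 1), (-1, 1), (-1, 0), (0, -1), (1, -1)]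

lemma dir_injective : Function.Injective dir := by decide

lemma dir_add_three (i : ZMod 6) : dir (i + 3) = -dir i := by revert i; decide

lemma hexDirs_eq_range_dir : hexDirs = Set.range dir := by
  ext x
  simp only [hexDirs, Set.mem_insert_iff, Set.mem_singleton_iff, Set.mem_range]
  constructor
  · rintro (rfl | rfl | rfl | rfl | rfl | rfl)
    exacts [⟨0, rfl⟩, ⟨3, rfl⟩, ⟨1, rfl⟩, ⟨4, rfl⟩, ⟨5, rfl⟩, ⟨2, rfl⟩]
  · rintro ⟨i, rfl⟩
    fin_cases i <;> simp [dir]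

lemma dir_sub_dir_mem_range_iff (i j : ZMod 6) :
    dir i - dir j ∈ Set.range dir ↔ j = i + 1 ∨ i = j + 1 := by
  simp only [Set.mem_range]
  revert i j
  decide

lemma tri_adj_iff {p q : ℤ × ℤ} : tri.Adj p q ↔ ∃ i, q = p + dir i := by
  change p - q ∈ hexDirs ↔ _
  rw [hexDirs_eq_range_dir]
  constructor
  · rintro ⟨i, h⟩
    exact ⟨i + 3, by rw [dir_add_three, h]; abel⟩
  · rintro ⟨i, rfl⟩
    exact ⟨i + 3, by rw [dir_add_three]; abel⟩

lemma tri_adj_add_dir (p : ℤ × ℤ) (i : ZMod 6) : tri.Adj p (p + dir i) :=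
  tri_adj_iff.2 ⟨i, rfl⟩

lemma tri_adj_add_dir_iff {p : ℤ × ℤ} {i j : ZMod 6} :
    tri.Adj (p + dir i) (p + dir j) ↔ j = i + 1 ∨ i = j + 1 := by
  change (p + dir i) - (p + dir j) ∈ hexDirs ↔ _
  rw [add_sub_add_left_eq_sub, hexDirs_eq_range_dir, dir_sub_dir_mem_range_iff]

open Classical in
noncomputable def dirsIn (T : Set (ℤ × ℤ)) (p : ℤ × ℤ) : Finset (ZMod 6) :=
  {i | p + dir i ∈ T}

variable {T : Set (ℤ × ℤ)} {p : ℤ × ℤ}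

lemma mem_dirsIn {i : ZMod 6} : i ∈ dirsIn T p ↔ p + dir i ∈ T := by
  simp [dirsIn]

lemma ncard_nbrs_tri : (nbrs tri T p).ncard = #(dirsIn T p) := by
  rw [← Set.ncard_coe_finset, ← Set.ncard_image_of_injective _ ((add_right_injective p).comp
    dir_injective)]
  congr 1
  ext q
  simp only [nbrs, Set.mem_ofPred_eq, Set.mem_image, Finset.mem_coe, mem_dirsIn,
    Function.comp_apply, tri_adj_iff]
  constructor
  · rintro ⟨hq, i, rfl⟩
    exact ⟨i, hq, rfl⟩
  · rintro ⟨i, hi, rfl⟩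
    exact ⟨hi, i, rfl⟩

lemma sym2_dir_injective : Function.Injective fun i => s(dir i, dir (i + 1)) := by decide

lemma ncard_edgesOf_nbrs_tri :
    (edgesOf tri (nbrs tri T p)).ncard = #{i ∈ dirsIn T p | i + 1 ∈ dirsIn T p} := by
  have hinj : Function.Injective fun i => s(p + dir i, p + dir (i + 1)) :=
    (Sym2.map.injective (add_right_injective p)).comp sym2_dir_injective
  rw [← Set.ncard_coe_finset, ← Set.ncard_image_of_injective _ hinj]
  congr 1
  ext e
  simp only [edgesOf, nbrs, Set.mem_ofPred_eq, Set.mem_image, Finset.coe_filter, mem_dirsIn]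
  constructor
  · rintro ⟨_, _, rfl, ⟨ha, hpa⟩, ⟨hb, hpb⟩, hab⟩
    obtain ⟨i, rfl⟩ := tri_adj_iff.1 hpa
    obtain ⟨j, rfl⟩ := tri_adj_iff.1 hpb
    rcases tri_adj_add_dir_iff.1 hab with rfl | rfl
    · exact ⟨i, ⟨ha, hb⟩, rfl⟩
    · exact ⟨j, ⟨hb, ha⟩, Sym2.eq_swap⟩
  · rintro ⟨i, ⟨hi, hi'⟩, rfl⟩
    exact ⟨_, _, rfl, ⟨hi, tri_adj_add_dir p i⟩, ⟨hi', tri_adj_add_dir p (i + 1)⟩,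
      tri_adj_add_dir_iff.2 (Or.inl rfl)⟩

lemma ncard_nbrs_tri_of_isInteriorPt (hp : IsInteriorPt tri T p) :
    (nbrs tri T p).ncard = (edgesOf tri (nbrs tri T p)).ncard := by
  have huniv : dirsIn T p = Finset.univ :=
    Finset.eq_univ_of_forall fun i => mem_dirsIn.2 (hp.2 _ (tri_adj_add_dir p i))
  rw [ncard_nbrs_tri, ncard_edgesOf_nbrs_tri, huniv]
  simp

/-- A proper nonempty set of vertices of the hexagon, without isolated vertices, in which every
run of two consecutive vertices extends on one side, is a single arc: it has one vertex more
than edges. -/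
lemma card_eq_card_filter_succ_mem_add_one (S : Finset (ZMod 6)) (hne : S.Nonempty)
    (hS : S ≠ Finset.univ) (hiso : ∀ i ∈ S, i - 1 ∈ S ∨ i + 1 ∈ S)
    (hrun : ∀ d, d + 1 ∈ S → d + 2 ∈ S → d ∈ S ∨ d + 3 ∈ S) :
    #S = #{i ∈ S | i + 1 ∈ S} + 1 := by
  revert S
  decide

lemma ncard_nbrs_tri_of_isBoundaryPt (hT : IsDomain tri T) (hp : IsBoundaryPt tri T p) :
    (nbrs tri T p).ncard = (edgesOf tri (nbrs tri T p)).ncard + 1 := by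
  rw [ncard_nbrs_tri, ncard_edgesOf_nbrs_tri]
  apply card_eq_card_filter_succ_mem_add_one
  · obtain ⟨q, hpq, hq⟩ := hp.2.2
    obtain ⟨i, rfl⟩ := tri_adj_iff.1 hpq
    exact ⟨i, mem_dirsIn.2 hq.1⟩
  · intro huniv
    refine hp.2.1 ⟨hp.1, fun q hpq => ?_⟩
    obtain ⟨i, rfl⟩ := tri_adj_iff.1 hpq
    exact mem_dirsIn.1 (huniv ▸ Finset.mem_univ i)
  · intro i hi
    obtain ⟨⟨r, hr, hqr⟩, -⟩ := hT.1 p hp.1 _ ⟨mem_dirsIn.1 hi, tri_adj_add_dir p i⟩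
    obtain ⟨j, rfl⟩ := tri_adj_iff.1 hr.2
    rcases tri_adj_add_dir_iff.1 hqr with rfl | rfl
    · exact Or.inr (mem_dirsIn.2 hr.1)
    · exact Or.inl (mem_dirsIn.2 (by simpa using hr.1))
  · intro d h1 h2
    by_contra! hout
    have hb1 := isBoundaryPt_of_adj_notMem hT.2.1 (mem_dirsIn.1 h1)
      (tri_adj_add_dir_iff.2 (Or.inr rfl)) (mt mem_dirsIn.2 hout.1)
    have hb2 := isBoundaryPt_of_adj_notMem hT.2.1 (mem_dirsIn.1 h2)
      (tri_adj_add_dir_iff.2 (Or.inl (by ring))) (mt mem_dirsIn.2 hout.2)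
    exact (hT.2.2.1 p hp).2 _ ⟨hb1, tri_adj_add_dir p _⟩ _ ⟨hb2, tri_adj_add_dir p _⟩
      (tri_adj_add_dir_iff.2 (Or.inl (by ring)))

theorem sum_ncard_nbrs_tri_eq_add_ncard_boundarySet (hfin : T.Finite) (hT : IsDomain tri T) :
    ∑ p ∈ hfin.toFinset, (nbrs tri T p).ncard =
      ∑ p ∈ hfin.toFinset, (edgesOf tri (nbrs tri T p)).ncard + (boundarySet tri T).ncard := by
  classical
  have hpt : ∀ p ∈ hfin.toFinset, (nbrs tri T p).ncard =
      (edgesOf tri (nbrs tri T p)).ncard + if IsBoundaryPt tri T p then 1 else 0 := by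
    intro p hp
    rcases hT.2.1 p (hfin.mem_toFinset.1 hp) with hint | hbd
    · rw [if_neg fun hbd => hbd.2.1 hint, ncard_nbrs_tri_of_isInteriorPt hint, add_zero]
    · rw [if_pos hbd, ncard_nbrs_tri_of_isBoundaryPt hT hbd]
  have hbdry : boundarySet tri T = ↑{p ∈ hfin.toFinset | IsBoundaryPt tri T p} := by
    ext p
    simp only [boundarySet, Finset.coe_filter, hfin.mem_toFinset]
    exact ⟨fun hbd => ⟨hbd.1, hbd⟩, And.right⟩
  rw [Finset.sum_congr rfl hpt, Finset.sum_add_distrib, Finset.sum_boole, hbdry,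
    Set.ncard_coe_finset, Nat.cast_id]

end TriangularLattice

/-- the number of interior points of a finite smooth domain equals
`2f - e + χ(G)`. -/
theorem interior_count (T : Set (ℤ × ℤ)) (hfin : T.Finite)
    (hsm : IsSmoothDomain tri T) :
    ((interiorSet tri T).ncard : ℤ) =
      2 * ((facesOf tri T).ncard : ℤ) - ((edgesOf tri T).ncard : ℤ) + euler tri T := by
  obtain ⟨hT, -⟩ := hsm
  have hdeg := sum_ncard_nbrs (G := tri) hfin
  have hlink := sum_ncard_edgesOf_nbrs (G := tri) hfin
  have hdefect := sum_ncard_nbrs_tri_eq_add_ncard_boundarySet hfin hT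
  have hsplit := ncard_eq_ncard_interiorSet_add_ncard_boundarySet hfin hT.2.1
  unfold euler
  omega

end TriGB
end

section
/- Combinatorial Gauss–Bonnet, closed case: if G is a finite two-dimensional graph without boundary (every vertex's unit sphere is a simple closed one-dimensional graph, i.e. a cycle), then Σ_{g ∈ G} (6 − |S₁(g)|) = 6 χ(G), where |S₁(g)| is the number of edges of the unit sphere of g and χ(G) = v − e + f. -/
/-!
Common framework: subgraphs of an ambient simple graph are modelled as vertex sets
with the induced graph structure (this captures condition (iv): domains are induced
subgraphs). Spheres, curvature, interior/boundary points, domains, smooth domains,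
simple connectivity, Euler characteristic, and the triangular lattice `tri`.
-/

namespace TriGB

variable {V : Type*}

/-!
Each edge `ab` of the unit sphere `S₁(g)` is the triangle `gab` seen from `g`, so
`Σ_g |S₁(g)| = 3f`. If moreover every `S₁(g)` is a cycle, it has as many edges as vertices,
so `Σ_g |S₁(g)| = Σ_g deg g = 2e`. Hence `Σ_g (6 - |S₁(g)|) = 6v - 3·2e + 2·3f = 6χ`.
-/

theorem _root_.Sym2.toFinset_injective {α : Type*} [DecidableEq α] :
    Function.Injective (Sym2.toFinset : Sym2 α → Finset α) := fun p q h =>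
  Sym2.ext fun x => by rw [← Sym2.mem_toFinset, h, Sym2.mem_toFinset]

theorem _root_.Finset.sum_card_filter_mem {α : Type*} [Fintype α] [DecidableEq α]
    (B : Finset (Finset α)) : ∑ a, {t ∈ B | a ∈ t}.card = ∑ t ∈ B, t.card := by
  simp_rw [Finset.card_filter]
  rw [Finset.sum_comm]
  simp

lemma restrict_univ (G : SimpleGraph V) : restrict G Set.univ = G := by
  ext a b
  simp [restrict]

lemma edgesOf_eq_edgeSet_restrict (G : SimpleGraph V) (S : Set V) :
    edgesOf G S = (restrict G S).edgeSet := by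
  ext e
  induction e using Sym2.ind with
  | _ a b =>
    constructor
    · rintro ⟨x, y, hxy, hx, hy, hadj⟩
      rcases Sym2.eq_iff.mp hxy with ⟨rfl, rfl⟩ | ⟨rfl, rfl⟩
      exacts [⟨hx, hy, hadj⟩, ⟨hy, hx, hadj.symm⟩]
    · rintro ⟨ha, hb, hadj⟩
      exact ⟨a, b, rfl, ha, hb, hadj⟩

lemma edgesOf_univ (G : SimpleGraph V) : edgesOf G Set.univ = G.edgeSet := by
  rw [edgesOf_eq_edgeSet_restrict, restrict_univ]

lemma sum_ncard_neighborSet [Fintype V] (G : SimpleGraph V) :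
    ∑ g, (G.neighborSet g).ncard = 2 * G.edgeSet.ncard := by
  classical
  simp_rw [Set.ncard_eq_toFinset_card', Set.toFinset_card, SimpleGraph.card_neighborSet_eq_degree,
    G.sum_degrees_eq_twice_card_edges, SimpleGraph.edgeFinset, Set.toFinset_card]

lemma neighborSet_restrict (G : SimpleGraph V) (S : Set V) {q : V} (hq : q ∈ S) :
    (restrict G S).neighborSet q = nbrs G S q := by
  ext r
  simp [restrict, nbrs, hq]

lemma neighborSet_restrict_of_notMem (G : SimpleGraph V) (S : Set V) {q : V} (hq : q ∉ S) :
    (restrict G S).neighborSet q = ∅ := by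
  ext r
  simp [restrict, hq]

lemma ncard_edgesOf_of_forall_ncard_nbrs_eq_two [Fintype V] (G : SimpleGraph V) (S : Set V)
    (h : ∀ q ∈ S, (nbrs G S q).ncard = 2) : (edgesOf G S).ncard = S.ncard := by
  classical
  refine Nat.eq_of_mul_eq_mul_left two_pos ?_
  calc 2 * (edgesOf G S).ncard = ∑ q, ((restrict G S).neighborSet q).ncard := by
        rw [edgesOf_eq_edgeSet_restrict, sum_ncard_neighborSet]
    _ = ∑ q ∈ S.toFinset, ((restrict G S).neighborSet q).ncard :=
        (Finset.sum_subset (Finset.subset_univ _) fun q _ hq => by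
          rw [neighborSet_restrict_of_notMem G S (by simpa using hq), Set.ncard_empty]).symm
    _ = ∑ q ∈ S.toFinset, 2 := Finset.sum_congr rfl fun q hq => by
        rw [neighborSet_restrict G S (Set.mem_toFinset.mp hq), h q (Set.mem_toFinset.mp hq)]
    _ = 2 * S.ncard := by rw [Finset.sum_const, smul_eq_mul, mul_comm, Set.ncard_eq_toFinset_card']

lemma facesOf_univ (G : SimpleGraph V) :
    facesOf G Set.univ = {t : Finset V | G.IsNClique 3 t} := by
  ext t
  simp [facesOf, SimpleGraph.isNClique_iff, SimpleGraph.IsClique, Set.Pairwise, and_comm]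

lemma ncard_edgesOf_neighborSet (G : SimpleGraph V) (g : V) :
    (edgesOf G (G.neighborSet g)).ncard = {t : Finset V | G.IsNClique 3 t ∧ g ∈ t}.ncard := by
  classical
  have hg : ∀ e ∈ edgesOf G (G.neighborSet g), g ∉ e.toFinset := by
    rintro _ ⟨a, b, rfl, ha, hb, -⟩ hmem
    rcases Sym2.mem_iff.mp (Sym2.mem_toFinset.mp hmem) with rfl | rfl
    exacts [G.loopless.irrefl _ ha, G.loopless.irrefl _ hb]
  have hinj : Set.InjOn (fun e : Sym2 V => insert g e.toFinset) (edgesOf G (G.neighborSet g)) :=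
    fun e he e' he' h => Sym2.toFinset_injective <| by
      rw [← Finset.erase_insert (hg e he), ← Finset.erase_insert (hg e' he')]
      exact congrArg (Finset.erase · g) h
  rw [← hinj.ncard_image]
  congr 1
  ext t
  constructor
  · rintro ⟨_, ⟨a, b, rfl, ha, hb, hab⟩, rfl⟩
    refine ⟨?_, Finset.mem_insert_self _ _⟩
    dsimp only
    rw [Sym2.toFinset_mk_eq, SimpleGraph.is3Clique_triple_iff]
    exact ⟨ha, hb, hab⟩
  · rintro ⟨ht, hgt⟩
    obtain ⟨a, b, hab, hpair⟩ := Finset.card_eq_two.mp (ht.erase_of_mem hgt).card_eq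
    have hat : a ≠ g ∧ a ∈ t := Finset.mem_erase.mp (hpair ▸ Finset.mem_insert_self a {b})
    have hbt : b ≠ g ∧ b ∈ t := Finset.mem_erase.mp (hpair ▸ Finset.mem_insert_of_mem
      (Finset.mem_singleton_self b))
    refine ⟨s(a, b), ⟨a, b, rfl, ht.isClique hgt hat.2 hat.1.symm,
      ht.isClique hgt hbt.2 hbt.1.symm, ht.isClique hat.2 hbt.2 hab⟩, ?_⟩
    simp only [Sym2.toFinset_mk_eq, ← hpair, Finset.insert_erase hgt]

lemma sum_ncard_isNClique_mem [Fintype V] (G : SimpleGraph V) (n : ℕ) :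
    ∑ g, {t : Finset V | G.IsNClique n t ∧ g ∈ t}.ncard =
      n * {t : Finset V | G.IsNClique n t}.ncard := by
  classical
  have hfiber (g : V) :
      {t : Finset V | G.IsNClique n t ∧ g ∈ t} = ↑{t ∈ G.cliqueFinset n | g ∈ t} := by
    ext t; simp
  have hall : {t : Finset V | G.IsNClique n t} = ↑(G.cliqueFinset n) := by ext t; simp
  simp_rw [hfiber, hall, Set.ncard_coe_finset, Finset.sum_card_filter_mem]
  rw [Finset.sum_congr rfl fun t ht => (G.mem_cliqueFinset_iff.mp ht).card_eq, Finset.sum_const,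
    smul_eq_mul, mul_comm]

/-- combinatorial Gauss-Bonnet, closed case: if every unit sphere of a
finite graph is a cycle, then `Σ_g (6 - |S₁(g)|) = 6 χ(G)`, where `|S₁(g)|` is the
number of edges of the unit sphere of `g`. -/
theorem combinatorial_gauss_bonnet_closed {W : Type*} [Fintype W] (G : SimpleGraph W)
    (h : ∀ p : W, IsCycleSet G (G.neighborSet p)) :
    ∑ g : W, ((6 : ℤ) - (sphereEdgeCount G g : ℤ)) = 6 * euler G Set.univ := by
  have hedges : ∑ g, sphereEdgeCount G g = 2 * (edgesOf G Set.univ).ncard := by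
    simp_rw [sphereEdgeCount, fun g => ncard_edgesOf_of_forall_ncard_nbrs_eq_two G _ (h g).2.2.2,
      sum_ncard_neighborSet, edgesOf_univ]
  have hfaces : ∑ g, sphereEdgeCount G g = 3 * (facesOf G Set.univ).ncard := by
    simp_rw [sphereEdgeCount, ncard_edgesOf_neighborSet, sum_ncard_isNClique_mem, facesOf_univ]
  have hverts : (Set.univ : Set W).ncard = Fintype.card W := by
    rw [Set.ncard_univ, Nat.card_eq_fintype_card]
  zify at hedges hfaces
  rw [euler, hverts, Finset.sum_sub_distrib, Finset.sum_const, Finset.card_univ, nsmul_eq_mul]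
  linarith

end TriGB
end
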